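/- The number of n × n bibifix-free matrices over a q-letter alphabet satisfies: |BBF_1^q| = q; |BBF_n^q| = q^{2n−1}·|BBF_{n−1}^q| for n odd, n ≥ 3; and |BBF_n^q| = q^{2n−1}·|BBF_{n−1}^q| − q^{n²/2}·|BBF_{n/2}^q| for n even. -/
import Mathlib


def topLeft {α : Type*} {n : ℕ} (T : Matrix (Fin n) (Fin n) α) (r : ℕ) (h : r ≤ n) :
    Matrix (Fin r) (Fin r) α :=
  fun a b => T (Fin.castLE h a) (Fin.castLE h b)

def botRight {α : Type*} {n : ℕ} (T : Matrix (Fin n) (Fin n) α) (r : ℕ) (h : r ≤ n) :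
    Matrix (Fin r) (Fin r) α :=
  fun a b => T ⟨n - r + a, by have := a.isLt; omega⟩ ⟨n - r + b, by have := b.isLt; omega⟩

def BibifixFree {α : Type*} {n : ℕ} (T : Matrix (Fin n) (Fin n) α) : Prop :=
  ∀ (r : ℕ) (_ : 1 ≤ r) (h2 : r < n), topLeft T r h2.le ≠ botRight T r h2.le

/-- The number of `n × n` bibifix-free matrices over a `q`-letter alphabet. -/
noncomputable def BBFcard (q n : ℕ) : ℕ :=
  Nat.card {T : Matrix (Fin n) (Fin n) (Fin q) // BibifixFree T}

section Helpers
variable {α : Type*}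

lemma Tcongr {n : ℕ} (T : Matrix (Fin n) (Fin n) α) {a b c d : Fin n}
    (h1 : (a : ℕ) = (c : ℕ)) (h2 : (b : ℕ) = (d : ℕ)) : T a b = T c d := by
  have e1 : a = c := Fin.ext h1
  have e2 : b = d := Fin.ext h2
  rw [e1, e2]

lemma border_iff {n r : ℕ} (T : Matrix (Fin n) (Fin n) α) (h : r ≤ n) :
    topLeft T r h = botRight T r h ↔
      ∀ i j : ℕ, ∀ (hi : i < r) (hj : j < r),
        T ⟨i, by omega⟩ ⟨j, by omega⟩ = T ⟨n - r + i, by omega⟩ ⟨n - r + j, by omega⟩ := by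
  constructor
  · intro H i j hi hj
    exact congrFun (congrFun H ⟨i, hi⟩) ⟨j, hj⟩
  · intro H
    funext a b
    exact H a.1 b.1 a.2 b.2

/-- NoBorderUpTo k -/
def NBU {n : ℕ} (k : ℕ) (T : Matrix (Fin n) (Fin n) α) : Prop :=
  ∀ r : ℕ, 1 ≤ r → r ≤ k → ∀ h : r ≤ n, topLeft T r h ≠ botRight T r h

lemma descend {n r : ℕ} (T : Matrix (Fin n) (Fin n) α) (h1 : n < 2 * r) (h2 : r < n)
    (hb : topLeft T r h2.le = botRight T r h2.le) :
    topLeft T (2 * r - n) (by omega) = botRight T (2 * r - n) (by omega) := by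
  rw [border_iff] at hb ⊢
  intro i j hi hj
  refine (hb i j (by omega) (by omega)).trans ?_
  refine (hb (n - r + i) (n - r + j) (by omega) (by omega)).trans ?_
  exact Tcongr T (by simp only [Fin.val_mk]; omega) (by simp only [Fin.val_mk]; omega)

lemma bbf_iff_nbu {n : ℕ} (T : Matrix (Fin n) (Fin n) α) :
    BibifixFree T ↔ NBU (n / 2) T := by
  constructor
  · intro hB r h1 h2 h
    exact hB r h1 (by omega)
  · intro hN
    have key : ∀ r : ℕ, r < n → 1 ≤ r → ∀ h : r < n,
        topLeft T r h.le ≠ botRight T r h.le := by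
      intro r
      induction r using Nat.strong_induction_on with
      | _ r ih =>
        intro hrn hr1 h hb
        by_cases hle : r ≤ n / 2
        · exact hN r hr1 hle h.le hb
        · exact ih (2 * r - n) (by omega) (by omega) (by omega) (by omega)
            (descend T (by omega) h hb)
    exact fun r h1 h2 => key r h2 h1 h2
end Helpers


section Ins
variable {α : Type*}

def mlift (k : ℕ) {m : ℕ} (hk : k ≤ m) (i : Fin m) : Fin (m + 1) :=
  if (i : ℕ) < k then ⟨i, by omega⟩ else ⟨i + 1, by omega⟩

def munlift (k : ℕ) {m : ℕ} (hm : 1 ≤ m) (i : Fin (m + 1)) : Fin m :=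
  if (i : ℕ) < k then ⟨min i (m - 1), by omega⟩ else ⟨i - 1, by have := i.isLt; omega⟩

lemma mlift_val_lt (k : ℕ) {m : ℕ} (hk : k ≤ m) (i : Fin m) (h : (i : ℕ) < k) :
    (mlift k hk i : ℕ) = i := by simp [mlift, h]

lemma mlift_val_ge (k : ℕ) {m : ℕ} (hk : k ≤ m) (i : Fin m) (h : ¬ (i : ℕ) < k) :
    (mlift k hk i : ℕ) = i + 1 := by simp [mlift, h]

lemma mlift_ne (k : ℕ) {m : ℕ} (hk : k ≤ m) (i : Fin m) : (mlift k hk i : ℕ) ≠ k := by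
  unfold mlift; split <;> simp <;> omega

lemma munlift_val_lt (k : ℕ) {m : ℕ} (hm : 1 ≤ m) (i : Fin (m + 1)) (h : (i : ℕ) < k)
    (h2 : (i : ℕ) < m) : (munlift k hm i : ℕ) = i := by
  unfold munlift; rw [if_pos h]; simp; omega

lemma munlift_val_ge (k : ℕ) {m : ℕ} (hm : 1 ≤ m) (i : Fin (m + 1)) (h : ¬ (i : ℕ) < k) :
    (munlift k hm i : ℕ) = i - 1 := by
  unfold munlift; rw [if_neg h]

lemma munlift_mlift (k : ℕ) {m : ℕ} (hk : k ≤ m) (hm : 1 ≤ m) (i : Fin m) :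
    munlift k hm (mlift k hk i) = i := by
  have := i.isLt
  apply Fin.ext
  by_cases h : (i : ℕ) < k
  · rw [munlift_val_lt k hm _ (by rw [mlift_val_lt k hk i h]; exact h)
      (by rw [mlift_val_lt k hk i h]; omega), mlift_val_lt k hk i h]
  · rw [munlift_val_ge k hm _ (by rw [mlift_val_ge k hk i h]; omega),
      mlift_val_ge k hk i h]
    omega

lemma mlift_munlift (k : ℕ) {m : ℕ} (hk : k ≤ m) (hm : 1 ≤ m) (i : Fin (m + 1))
    (h : (i : ℕ) ≠ k) : mlift k hk (munlift k hm i) = i := by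
  have := i.isLt
  apply Fin.ext
  by_cases h2 : (i : ℕ) < k
  · have hv : (munlift k hm i : ℕ) = i := munlift_val_lt k hm i h2 (by omega)
    rw [mlift_val_lt k hk _ (by rw [hv]; exact h2), hv]
  · have hv : (munlift k hm i : ℕ) = i - 1 := munlift_val_ge k hm i h2
    rw [mlift_val_ge k hk _ (by rw [hv]; omega), hv]
    omega

def insEquiv (q m k : ℕ) (hk : k ≤ m) (hm : 1 ≤ m) :
    Matrix (Fin (m + 1)) (Fin (m + 1)) (Fin q) ≃
      Matrix (Fin m) (Fin m) (Fin q) × ((Fin (m + 1) → Fin q) × (Fin m → Fin q)) where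
  toFun T := (fun a b => T (mlift k hk a) (mlift k hk b),
              fun j => T ⟨k, by omega⟩ j,
              fun i => T (mlift k hk i) ⟨k, by omega⟩)
  invFun x i j :=
    if (i : ℕ) = k then x.2.1 j
    else if (j : ℕ) = k then x.2.2 (munlift k hm i)
    else x.1 (munlift k hm i) (munlift k hm j)
  left_inv T := by
    funext i j
    by_cases hi : (i : ℕ) = k
    · simp only [hi, if_pos]
      exact Tcongr T (by simp [hi]) rfl
    · by_cases hj : (j : ℕ) = k
      · simp only [hi, hj, if_neg, if_pos, ite_true, ite_false]
        rw [mlift_munlift k hk hm i hi]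
        exact Tcongr T rfl (by simp [hj])
      · simp only [hi, hj, ite_false]
        rw [mlift_munlift k hk hm i hi, mlift_munlift k hk hm j hj]
  right_inv x := by
    obtain ⟨S, row, col⟩ := x
    refine Prod.ext ?_ (Prod.ext ?_ ?_)
    · funext a b
      simp only [mlift_ne k hk a, mlift_ne k hk b, ite_false,
        munlift_mlift k hk hm]
    · funext j
      simp only [Fin.val_mk, ite_true]
    · funext i
      simp only [mlift_ne k hk i, Fin.val_mk, ite_false, ite_true,
        munlift_mlift k hk hm]
end Ins


section InsCard
variable {α : Type*}

def fstSubEquiv {α β : Type*} (p : α → Prop) : {x : α × β // p x.1} ≃ {a // p a} × β where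
  toFun x := (⟨x.1.1, x.2⟩, x.1.2)
  invFun y := ⟨(y.1.1, y.2), y.1.2⟩
  left_inv x := rfl
  right_inv y := rfl

lemma nbu_ins_iff {m : ℕ} (k : ℕ) (hk : 2 * k ≤ m) (hm : 1 ≤ m)
    (T : Matrix (Fin (m + 1)) (Fin (m + 1)) α) :
    NBU k T ↔ NBU k (fun a b => T (mlift k (by omega) a) (mlift k (by omega) b)) := by
  have hkm : k ≤ m := by omega
  set S : Matrix (Fin m) (Fin m) α :=
    fun a b => T (mlift k (by omega) a) (mlift k (by omega) b) with hS
  have key : ∀ (r : ℕ), 1 ≤ r → r ≤ k → ∀ (h : r ≤ m) (h' : r ≤ m + 1),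
      (topLeft T r h' = botRight T r h' ↔ topLeft S r h = botRight S r h) := by
    intro r h1 h2 h h'
    rw [border_iff, border_iff]
    have eL : ∀ (i : ℕ) (hi : i < r), (mlift k hkm (⟨i, by omega⟩ : Fin m) : ℕ) = i := by
      intro i hi
      exact mlift_val_lt k hkm _ (by show i < k; omega)
    have eR : ∀ (i : ℕ) (hi : i < r),
        (mlift k hkm (⟨m - r + i, by omega⟩ : Fin m) : ℕ) = m + 1 - r + i := by
      intro i hi
      rw [mlift_val_ge k hkm _ (by show ¬ m - r + i < k; omega)]
      show m - r + i + 1 = m + 1 - r + i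
      omega
    constructor
    · intro H i j hi hj
      show T (mlift k hkm ⟨i, by omega⟩) (mlift k hkm ⟨j, by omega⟩) =
           T (mlift k hkm ⟨m - r + i, by omega⟩) (mlift k hkm ⟨m - r + j, by omega⟩)
      calc T (mlift k hkm ⟨i, by omega⟩) (mlift k hkm ⟨j, by omega⟩)
          = T ⟨i, by omega⟩ ⟨j, by omega⟩ := Tcongr T (eL i hi) (eL j hj)
        _ = T ⟨m + 1 - r + i, by omega⟩ ⟨m + 1 - r + j, by omega⟩ := H i j hi hj
        _ = T (mlift k hkm ⟨m - r + i, by omega⟩) (mlift k hkm ⟨m - r + j, by omega⟩) :=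
            Tcongr T (by rw [eR i hi]) (by rw [eR j hj])
    · intro H i j hi hj
      have H2 : T (mlift k hkm ⟨i, by omega⟩) (mlift k hkm ⟨j, by omega⟩) =
           T (mlift k hkm ⟨m - r + i, by omega⟩) (mlift k hkm ⟨m - r + j, by omega⟩) :=
        H i j hi hj
      calc T ⟨i, by omega⟩ ⟨j, by omega⟩
          = T (mlift k hkm ⟨i, by omega⟩) (mlift k hkm ⟨j, by omega⟩) :=
            Tcongr T (eL i hi).symm (eL j hj).symm
        _ = T (mlift k hkm ⟨m - r + i, by omega⟩) (mlift k hkm ⟨m - r + j, by omega⟩) := H2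
        _ = T ⟨m + 1 - r + i, by omega⟩ ⟨m + 1 - r + j, by omega⟩ :=
            Tcongr T (eR i hi) (eR j hj)
  constructor
  · intro H r h1 h2 h hb
    exact H r h1 h2 (by omega) ((key r h1 h2 h (by omega)).mpr hb)
  · intro H r h1 h2 h hb
    exact H r h1 h2 (by omega) ((key r h1 h2 (by omega) h).mp hb)

lemma ins_card (q n m k : ℕ) (hnm : n = m + 1) (hm : 1 ≤ m) (hk : 2 * k ≤ m) :
    Nat.card {T : Matrix (Fin n) (Fin n) (Fin q) // NBU k T} =
      q ^ (2 * n - 1) * Nat.card {S : Matrix (Fin m) (Fin m) (Fin q) // NBU k S} := by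
  subst hnm
  have e1 := (insEquiv q m k (by omega) hm).subtypeEquiv
    (p := NBU k) (q := fun x => NBU k x.1) (fun T => nbu_ins_iff k hk hm T)
  have e2 := fstSubEquiv (β := (Fin (m + 1) → Fin q) × (Fin m → Fin q))
    (fun S : Matrix (Fin m) (Fin m) (Fin q) => NBU k S)
  rw [Nat.card_congr (e1.trans e2), Nat.card_prod, Nat.card_prod]
  have c1 : Nat.card (Fin (m + 1) → Fin q) = q ^ (m + 1) := by
    simp [Nat.card_eq_fintype_card, Fintype.card_fun]
  have c2 : Nat.card (Fin m → Fin q) = q ^ m := by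
    simp [Nat.card_eq_fintype_card, Fintype.card_fun]
  rw [c1, c2, ← pow_add]
  have e3 : m + 1 + m = 2 * (m + 1) - 1 := by omega
  rw [e3, mul_comm]

end InsCard


section Split

noncomputable def splitEquiv {α : Type*} (P Q : α → Prop) :
    {a // P a} ≃ {a // P a ∧ Q a} ⊕ {a // P a ∧ ¬ Q a} := by
  classical
  exact {
    toFun := fun x => if h : Q x.1 then Sum.inl ⟨x.1, x.2, h⟩ else Sum.inr ⟨x.1, x.2, h⟩
    invFun := Sum.elim (fun y => ⟨y.1, y.2.1⟩) (fun y => ⟨y.1, y.2.1⟩)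
    left_inv := fun x => by by_cases h : Q x.1 <;> simp [h]
    right_inv := fun y => by
      rcases y with y | y
      · simp [y.2.2]
      · simp [y.2.2] }

variable {α : Type*}

lemma nbu_succ_iff {n : ℕ} (k : ℕ) (hk1 : 1 ≤ k) (hkn : k ≤ n)
    (T : Matrix (Fin n) (Fin n) α) :
    NBU k T ↔ NBU (k - 1) T ∧ topLeft T k hkn ≠ botRight T k hkn := by
  constructor
  · intro H
    exact ⟨fun r h1 h2 h => H r h1 (by omega) h, H k hk1 le_rfl hkn⟩
  · rintro ⟨H1, H2⟩ r h1 h2 h hb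
    by_cases hr : r ≤ k - 1
    · exact H1 r h1 hr h hb
    · obtain rfl : r = k := by omega
      exact H2 hb

lemma split_card (q n k : ℕ) (hk1 : 1 ≤ k) (hkn : k ≤ n) :
    Nat.card {T : Matrix (Fin n) (Fin n) (Fin q) // NBU (k - 1) T} =
      Nat.card {T : Matrix (Fin n) (Fin n) (Fin q) // NBU k T} +
      Nat.card {T : Matrix (Fin n) (Fin n) (Fin q) //
        NBU (k - 1) T ∧ topLeft T k hkn = botRight T k hkn} := by
  rw [Nat.card_congr (splitEquiv (NBU (k - 1))
    (fun T => topLeft T k hkn ≠ botRight T k hkn)), Nat.card_sum]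
  congr 1
  · exact Nat.card_congr (Equiv.subtypeEquivRight fun T => (nbu_succ_iff k hk1 hkn T).symm)
  · exact Nat.card_congr (Equiv.subtypeEquivRight fun T =>
      and_congr_right fun _ => not_not)

end Split

section Diag
variable {α : Type*}

def diagEquiv (q k : ℕ) :
    Matrix (Fin (2 * k)) (Fin (2 * k)) (Fin q) ≃
      (Matrix (Fin k) (Fin k) (Fin q) × Matrix (Fin k) (Fin k) (Fin q)) ×
      (Matrix (Fin k) (Fin k) (Fin q) × Matrix (Fin k) (Fin k) (Fin q)) where
  toFun T := ((fun a b => T ⟨a, by have := a.isLt; omega⟩ ⟨b, by have := b.isLt; omega⟩,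
               fun a b => T ⟨a, by have := a.isLt; omega⟩ ⟨k + b, by have := b.isLt; omega⟩),
              (fun a b => T ⟨k + a, by have := a.isLt; omega⟩ ⟨b, by have := b.isLt; omega⟩,
               fun a b => T ⟨k + a, by have := a.isLt; omega⟩ ⟨k + b, by have := b.isLt; omega⟩))
  invFun x i j :=
    if hi : (i : ℕ) < k then
      (if hj : (j : ℕ) < k then x.1.1 ⟨i, hi⟩ ⟨j, hj⟩
       else x.1.2 ⟨i, hi⟩ ⟨j - k, by have := j.isLt; omega⟩)
    else
      (if hj : (j : ℕ) < k then x.2.1 ⟨i - k, by have := i.isLt; omega⟩ ⟨j, hj⟩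
       else x.2.2 ⟨i - k, by have := i.isLt; omega⟩ ⟨j - k, by have := j.isLt; omega⟩)
  left_inv T := by
    funext i j
    by_cases hi : (i : ℕ) < k <;> by_cases hj : (j : ℕ) < k <;>
      simp only [hi, hj, dite_true, dite_false] <;>
      exact Tcongr T (by first | omega | (simp only [Fin.val_mk, Fin.coe_castLE]; try omega)) (by first | omega | (simp only [Fin.val_mk, Fin.coe_castLE]; try omega))
  right_inv x := by
    obtain ⟨⟨TL, TR⟩, BL, BR⟩ := x
    have hl : ∀ a : Fin k, ((⟨a, by have := a.isLt; omega⟩ : Fin (2 * k)) : ℕ) < k := fun a => a.isLt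
    have hg : ∀ a : Fin k, ¬ ((⟨k + a, by have := a.isLt; omega⟩ : Fin (2 * k)) : ℕ) < k := by
      intro a; simp
    refine Prod.ext (Prod.ext ?_ ?_) (Prod.ext ?_ ?_) <;> (funext a b) <;>
      simp only [hl, hg, dite_true, dite_false] <;>
      exact Tcongr _ (by first | omega | (simp only [Fin.val_mk, Fin.coe_castLE]; try omega)) (by first | omega | (simp only [Fin.val_mk, Fin.coe_castLE]; try omega))
end Diag


section DiagCard

def diagSubEquiv {M : Type*} (P : M → Prop) :
    {x : (M × M) × (M × M) // P x.1.1 ∧ x.2.2 = x.1.1} ≃ {A // P A} × (M × M) where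
  toFun x := (⟨x.1.1.1, x.2.1⟩, (x.1.1.2, x.1.2.1))
  invFun y := ⟨((y.1.1, y.2.1), (y.2.2, y.1.1)), y.1.2, rfl⟩
  left_inv := by rintro ⟨⟨⟨TL, TR⟩, BL, BR⟩, hP, hE⟩; cases hE; rfl
  right_inv := fun y => rfl

lemma card_matM (q k : ℕ) : Nat.card (Matrix (Fin k) (Fin k) (Fin q)) = q ^ (k * k) := by
  have : Nat.card (Matrix (Fin k) (Fin k) (Fin q)) = Nat.card (Fin k → Fin k → Fin q) := rfl
  rw [this]
  simp [Nat.card_eq_fintype_card, Fintype.card_fun, pow_mul]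

lemma card_nbu_eq_bbf (q n k : ℕ) (h : k = n / 2) :
    Nat.card {T : Matrix (Fin n) (Fin n) (Fin q) // NBU k T} = BBFcard q n := by
  subst h
  exact Nat.card_congr (Equiv.subtypeEquivRight fun T => (bbf_iff_nbu T).symm)

lemma diag_card (q n k : ℕ) (hn : n = 2 * k) (hk1 : 1 ≤ k) (hkn : k ≤ n) :
    Nat.card {T : Matrix (Fin n) (Fin n) (Fin q) //
        NBU (k - 1) T ∧ topLeft T k hkn = botRight T k hkn} =
      q ^ (n ^ 2 / 2) * BBFcard q k := by
  subst hn
  have key : ∀ T : Matrix (Fin (2 * k)) (Fin (2 * k)) (Fin q),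
      (NBU (k - 1) T ∧ topLeft T k hkn = botRight T k hkn) ↔
      (BibifixFree ((diagEquiv q k) T).1.1 ∧
        ((diagEquiv q k) T).2.2 = ((diagEquiv q k) T).1.1) := by
    intro T
    set TL := ((diagEquiv q k) T).1.1 with hTL
    set BR := ((diagEquiv q k) T).2.2 with hBR
    have E1 : ∀ (r : ℕ) (hrk : r ≤ k) (h2 : r ≤ 2 * k),
        topLeft T r h2 = topLeft TL r hrk := by
      intro r hrk h2
      funext a b
      exact Tcongr T (by first | omega | (simp only [Fin.val_mk, Fin.coe_castLE]; try omega))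
        (by first | omega | (simp only [Fin.val_mk, Fin.coe_castLE]; try omega))
    have E2 : ∀ (r : ℕ) (hrk : r ≤ k) (h2 : r ≤ 2 * k),
        botRight T r h2 = botRight BR r hrk := by
      intro r hrk h2
      funext a b
      exact Tcongr T (by first | omega | (simp only [Fin.val_mk, Fin.coe_castLE]; try omega))
        (by first | omega | (simp only [Fin.val_mk, Fin.coe_castLE]; try omega))
    have E3a : topLeft T k hkn = TL := by
      funext a b
      exact Tcongr T (by first | omega | (simp only [Fin.val_mk, Fin.coe_castLE]; try omega))
        (by first | omega | (simp only [Fin.val_mk, Fin.coe_castLE]; try omega))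
    have E3b : botRight T k hkn = BR := by
      funext a b
      exact Tcongr T (by first | omega | (simp only [Fin.val_mk, Fin.coe_castLE]; try omega))
        (by first | omega | (simp only [Fin.val_mk, Fin.coe_castLE]; try omega))
    constructor
    · rintro ⟨h1, h2⟩
      have hE : TL = BR := E3a.symm.trans (h2.trans E3b)
      refine ⟨?_, hE.symm⟩
      intro r hr1 hrk hb
      apply h1 r hr1 (by omega) (by omega : r ≤ 2 * k)
      calc topLeft T r (by omega : r ≤ 2 * k) = topLeft TL r hrk.le := E1 r hrk.le _
        _ = botRight TL r hrk.le := hb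
        _ = botRight BR r hrk.le := by rw [hE]
        _ = botRight T r (by omega : r ≤ 2 * k) := (E2 r hrk.le _).symm
    · rintro ⟨hB, hE⟩
      constructor
      · intro r hr1 hrk h hb
        refine hB r hr1 (by omega : r < k) ?_
        calc topLeft TL r (by omega : r ≤ k) = topLeft T r h := (E1 r (by omega) h).symm
          _ = botRight T r h := hb
          _ = botRight BR r (by omega : r ≤ k) := E2 r (by omega) h
          _ = botRight TL r (by omega : r ≤ k) := by rw [hE]
      · rw [E3a, E3b]
        exact hE.symm
  have e1 := (diagEquiv q k).subtypeEquiv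
    (p := fun T => NBU (k - 1) T ∧ topLeft T k hkn = botRight T k hkn)
    (q := fun x => BibifixFree x.1.1 ∧ x.2.2 = x.1.1) key
  have e2 := diagSubEquiv (M := Matrix (Fin k) (Fin k) (Fin q)) BibifixFree
  rw [Nat.card_congr (e1.trans e2), Nat.card_prod, Nat.card_prod, card_matM,
    ← pow_add]
  have harith : (2 * k) ^ 2 / 2 = k * k + k * k := by
    have h4 : (2 * k) ^ 2 = 2 * (k * k + k * k) := by ring
    rw [h4, Nat.mul_div_cancel_left _ (by norm_num)]
  rw [harith]
  unfold BBFcard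
  ring

end DiagCard

theorem stmt_9 (q : ℕ) (hq : 2 ≤ q) :
    BBFcard q 1 = q ∧
    (∀ n : ℕ, Odd n → 3 ≤ n → BBFcard q n = q ^ (2 * n - 1) * BBFcard q (n - 1)) ∧
    (∀ n : ℕ, Even n → 2 ≤ n →
      BBFcard q n = q ^ (2 * n - 1) * BBFcard q (n - 1) - q ^ (n ^ 2 / 2) * BBFcard q (n / 2)) := by
  refine ⟨?_, ?_, ?_⟩
  · unfold BBFcard
    have e : {T : Matrix (Fin 1) (Fin 1) (Fin q) // BibifixFree T} ≃
        Matrix (Fin 1) (Fin 1) (Fin q) :=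
      Equiv.subtypeUnivEquiv (fun T r h1 h2 => absurd h2 (by omega))
    rw [Nat.card_congr e, card_matM]
    norm_num
  · intro n hodd h3
    have hmod : n % 2 = 1 := Nat.odd_iff.mp hodd
    set k := n / 2 with hk
    have h1 : BBFcard q n = Nat.card {T : Matrix (Fin n) (Fin n) (Fin q) // NBU k T} :=
      (card_nbu_eq_bbf q n k rfl).symm
    rw [h1, ins_card q n (n - 1) k (by omega) (by omega) (by omega),
      card_nbu_eq_bbf q (n - 1) k (by omega)]
  · intro n heven h2
    have hmod : n % 2 = 0 := Nat.even_iff.mp heven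
    set k := n / 2 with hk
    have hkn : k ≤ n := by omega
    have hs := split_card q n k (by omega) hkn
    have hins := ins_card q n (n - 1) (k - 1) (by omega) (by omega) (by omega)
    have hb1 := card_nbu_eq_bbf q (n - 1) (k - 1) (by omega)
    have hbn := card_nbu_eq_bbf q n k rfl
    have hd := diag_card q n k (by omega) (by omega) hkn
    rw [← hbn, ← hb1, ← hd, ← hins]
    omega
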